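/- arXiv:1303.6999 — 2 statements merged into one kernel-verified Lean document; each statement's English description precedes it below -/
import Mathlib

section
/- Let (X,d) be a complete separable metric space, (P_t)_{t≥0} a Markov semigroup on X, and λ ∈ ℝ with λ ≠ 0. Assume the Wasserstein contraction W_d(P_t(x,·), P_t(y,·)) ≤ e^{−λt} d(x,y) holds for all x, y ∈ X and t ≥ 0. Suppose there exist x₀ ∈ X and t₀ > 0 such that sup_{t ∈ [0,t₀]} ∫ d(y,x₀) P_t(x₀,dy) < ∞. Then there exist constants C₁, C₂ > 0 such that for every x ∈ X and every t ≥ 0 one has ∫ d(y,x₀) P_t(x,dy) ≤ e^{−λt} (d(x,x₀) + C₁) + C₂. -/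
open MeasureTheory ProbabilityTheory ENNReal NNReal

/-- The set of couplings of two probability measures. -/
def IsCoupling {X : Type*} [MeasurableSpace X] (ρ : Measure (X × X)) (μ ν : Measure X) : Prop :=
  IsProbabilityMeasure ρ ∧ ρ.map Prod.fst = μ ∧ ρ.map Prod.snd = ν

/-- The Wasserstein distance associated to the metric, with values in `[0,∞]`. -/
noncomputable def wassersteinDist {X : Type*} [MeasurableSpace X] [PseudoMetricSpace X]
    (μ ν : Measure X) : ℝ≥0∞ :=
  ⨅ ρ : {ρ : Measure (X × X) // IsCoupling ρ μ ν},
    ∫⁻ p, ENNReal.ofReal (dist p.1 p.2) ∂(ρ : Measure (X × X))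

/-- A Markov semigroup: a family of Markov kernels with `P 0 = δ` and the
Chapman–Kolmogorov property. -/
def IsMarkovSemigroup {X : Type*} [MeasurableSpace X] (P : ℝ≥0 → Kernel X X) : Prop :=
  (∀ t, IsMarkovKernel (P t)) ∧
  (∀ x : X, P 0 x = Measure.dirac x) ∧
  (∀ s t : ℝ≥0, P (t + s) = (P s) ∘ₖ (P t))

/-!
Testing a coupling of `P_t(x,·)` and `P_t(x₀,·)` against the 1-Lipschitz function `d(·, x₀)`
gives `∫ d(·,x₀) dP_t(x) ≤ a(t) + e^{-λt} d(x,x₀)` with `a(t) = ∫ d(·,x₀) dP_t(x₀)`, so only `a`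
needs a bound. Integrating the same inequality against `P_{t₀}(x₀,·)` and using
Chapman–Kolmogorov gives `a(t₀ + u) ≤ a(u) + e^{-λu} a(t₀)`. Iterating this from the window
`[0, t₀]`, where `a ≤ M`, bounds `a(s + n t₀)` by `M` times a geometric sum of ratio
`r = e^{-λt₀} ≠ 1`, which is at most `(1 + r + e^{-λt}) / |1 - r|`.
-/

theorem geom_sum_le_one_add_pow_div_abs {r : ℝ} (hr : 0 ≤ r) (hr1 : r ≠ 1) (n : ℕ) :
    ∑ k ∈ Finset.range n, r ^ k ≤ (1 + r ^ n) / |1 - r| := by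
  have hsum : ∑ k ∈ Finset.range n, r ^ k = |r ^ n - 1| / |r - 1| := by
    rw [← abs_div, ← geom_sum_eq hr1 n, abs_of_nonneg (Finset.sum_nonneg fun k _ ↦ by positivity)]
  rw [hsum, abs_sub_comm r]
  gcongr
  calc |r ^ n - 1| ≤ |r ^ n| + |1| := abs_sub _ _
    _ = 1 + r ^ n := by rw [abs_one, abs_of_nonneg (by positivity), add_comm]

theorem sum_exp_neg_mul_le {lam τ s : ℝ} (hr : Real.exp (-lam * τ) ≠ 1) (hs : 0 ≤ s)
    (hsτ : s ≤ τ) (n : ℕ) :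
    ∑ k ∈ Finset.range n, Real.exp (-lam * (s + k * τ)) ≤
      (1 + Real.exp (-lam * τ) + Real.exp (-lam * (s + n * τ))) / |1 - Real.exp (-lam * τ)| := by
  set r := Real.exp (-lam * τ)
  have hterm (k : ℕ) : Real.exp (-lam * (s + k * τ)) = Real.exp (-lam * s) * r ^ k := by
    rw [← Real.exp_nat_mul, ← Real.exp_add]
    ring_nf
  have hstart : Real.exp (-lam * s) ≤ 1 + r := by
    rcases le_total 0 lam with hlam | hlam
    · have : Real.exp (-lam * s) ≤ 1 := Real.exp_le_one_iff.mpr (by nlinarith)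
      linarith [Real.exp_pos (-lam * τ)]
    · have : Real.exp (-lam * s) ≤ r := Real.exp_le_exp.mpr (by nlinarith)
      linarith
  simp only [hterm, ← Finset.mul_sum]
  calc Real.exp (-lam * s) * ∑ k ∈ Finset.range n, r ^ k
      ≤ Real.exp (-lam * s) * ((1 + r ^ n) / |1 - r|) := by
        gcongr
        exact geom_sum_le_one_add_pow_div_abs (Real.exp_pos _).le hr n
    _ = (Real.exp (-lam * s) + Real.exp (-lam * s) * r ^ n) / |1 - r| := by ring
    _ ≤ (1 + r + Real.exp (-lam * s) * r ^ n) / |1 - r| := by gcongr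

theorem NNReal.exists_eq_add_nat_mul {τ : ℝ≥0} (hτ : 0 < τ) (t : ℝ≥0) :
    ∃ (n : ℕ) (s : ℝ≥0), s < τ ∧ t = s + n * τ := by
  set n := ⌊t / τ⌋₊
  have hle : (n : ℝ≥0) * τ ≤ t := (le_div_iff₀ hτ).mp (Nat.floor_le zero_le)
  refine ⟨n, t - n * τ, ?_, (tsub_add_cancel_of_le hle).symm⟩
  rw [tsub_lt_iff_right hle, ← one_add_mul, add_comm]
  exact (div_lt_iff₀ hτ).mp (Nat.lt_floor_add_one _)

theorem le_add_sum_mul_of_le_add_mul {a w : ℝ≥0 → ℝ≥0∞} {τ : ℝ≥0} {M : ℝ≥0∞}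
    (hstep : ∀ u, a (τ + u) ≤ a u + w u * a τ) (hM : ∀ s ≤ τ, a s ≤ M) (n : ℕ) {s : ℝ≥0}
    (hs : s ≤ τ) :
    a (s + n * τ) ≤ M + (∑ k ∈ Finset.range n, w (s + k * τ)) * M := by
  induction n with
  | zero => simpa using hM s hs
  | succ n ih =>
    calc a (s + (n + 1 : ℕ) * τ) = a (τ + (s + n * τ)) := by push_cast; ring_nf
      _ ≤ a (s + n * τ) + w (s + n * τ) * a τ := hstep _
      _ ≤ M + (∑ k ∈ Finset.range n, w (s + k * τ)) * M + w (s + n * τ) * M := by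
        gcongr
        exact hM τ le_rfl
      _ = M + (∑ k ∈ Finset.range (n + 1), w (s + k * τ)) * M := by
        rw [Finset.sum_range_succ, add_mul, add_assoc]

theorem exists_le_exp_mul_add_of_le_add_exp_mul {a : ℝ≥0 → ℝ≥0∞} {lam : ℝ} (hlam : lam ≠ 0)
    {τ : ℝ≥0} (hτ : 0 < τ)
    (hstep : ∀ u : ℝ≥0, a (τ + u) ≤ a u + ENNReal.ofReal (Real.exp (-lam * u)) * a τ)
    (hbound : (⨆ t ∈ Set.Icc (0 : ℝ≥0) τ, a t) < ∞) :
    ∃ C₁ C₂ : ℝ, 0 < C₁ ∧ 0 < C₂ ∧ ∀ t : ℝ≥0,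
      a t ≤ ENNReal.ofReal (Real.exp (-lam * t)) * ENNReal.ofReal C₁ + ENNReal.ofReal C₂ := by
  set M := ⨆ t ∈ Set.Icc (0 : ℝ≥0) τ, a t
  have hM (s : ℝ≥0) (hs : s ≤ τ) : a s ≤ M := le_biSup a (Set.mem_Icc.mpr ⟨zero_le, hs⟩)
  set Mr := M.toReal
  have hMr : M = ENNReal.ofReal Mr := (ENNReal.ofReal_toReal hbound.ne).symm
  set r := Real.exp (-lam * τ)
  have hr : r ≠ 1 := by
    simpa [r, Real.exp_eq_one_iff, hlam] using hτ.ne'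
  set K := |1 - r|
  have hK : 0 < K := abs_pos.mpr (sub_ne_zero.mpr (Ne.symm hr))
  refine ⟨Mr / K + 1, Mr + Mr * (1 + r) / K + 1, by positivity,
    by positivity, fun t ↦ ?_⟩
  obtain ⟨n, s, hsτ, rfl⟩ := NNReal.exists_eq_add_nat_mul hτ t
  have hcoe (k : ℕ) : ((s + k * τ : ℝ≥0) : ℝ) = s + k * τ := by push_cast; rfl
  have hsum : ∑ k ∈ Finset.range n, ENNReal.ofReal (Real.exp (-lam * ↑(s + k * τ))) ≤
      ENNReal.ofReal ((1 + r + Real.exp (-lam * ↑(s + n * τ))) / K) := by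
    rw [← ENNReal.ofReal_sum_of_nonneg fun k _ ↦ (Real.exp_pos _).le]
    simp only [hcoe]
    exact ENNReal.ofReal_le_ofReal (sum_exp_neg_mul_le hr s.2 hsτ.le n)
  calc a (s + n * τ)
      ≤ M + ENNReal.ofReal ((1 + r + Real.exp (-lam * ↑(s + n * τ))) / K) * M :=
        (le_add_sum_mul_of_le_add_mul hstep hM n hsτ.le).trans (by gcongr)
    _ ≤ _ := by
      set e := Real.exp (-lam * ↑(s + n * τ))
      have he : 0 ≤ e := (Real.exp_pos _).le
      rw [hMr, ← ENNReal.ofReal_mul (by positivity), ← ENNReal.ofReal_add (by positivity)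
        (by positivity), ← ENNReal.ofReal_mul he, ← ENNReal.ofReal_add (by positivity)
        (by positivity)]
      refine ENNReal.ofReal_le_ofReal (le_of_sub_nonneg ?_)
      have hslack : e * (Mr / K + 1) + (Mr + Mr * (1 + r) / K + 1) -
          (Mr + (1 + r + e) / K * Mr) = e + 1 := by
        field_simp
        ring
      rw [hslack]
      positivity

section Wasserstein

variable {X : Type*} [MeasurableSpace X] [PseudoMetricSpace X]

theorem lintegral_le_lintegral_add_wassersteinDist {f : X → ℝ≥0∞} (hf : Measurable f)
    (hf_lip : ∀ x y, f x ≤ f y + ENNReal.ofReal (dist x y)) (μ ν : Measure X) :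
    ∫⁻ x, f x ∂μ ≤ ∫⁻ x, f x ∂ν + wassersteinDist μ ν := by
  rw [wassersteinDist, ENNReal.add_iInf]
  refine le_iInf fun ⟨ρ, _, hρμ, hρν⟩ ↦ ?_
  calc ∫⁻ x, f x ∂μ = ∫⁻ p, f p.1 ∂ρ := by rw [← hρμ, lintegral_map hf measurable_fst]
    _ ≤ ∫⁻ p, f p.2 + ENNReal.ofReal (dist p.1 p.2) ∂ρ := lintegral_mono fun p ↦ hf_lip _ _
    _ = ∫⁻ x, f x ∂ν + ∫⁻ p, ENNReal.ofReal (dist p.1 p.2) ∂ρ := by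
      rw [lintegral_add_left (f := fun p : X × X ↦ f p.2) (hf.comp measurable_snd), ← hρν,
        lintegral_map hf measurable_snd]

variable [OpensMeasurableSpace X]

theorem lintegral_dist_le_of_wassersteinDist_le {μ ν : Measure X} {c : ℝ≥0∞} (x₀ : X)
    (h : wassersteinDist μ ν ≤ c) :
    ∫⁻ y, ENNReal.ofReal (dist y x₀) ∂μ ≤ ∫⁻ y, ENNReal.ofReal (dist y x₀) ∂ν + c := by
  refine (lintegral_le_lintegral_add_wassersteinDist (by fun_prop)
    (fun x y ↦ ?_) μ ν).trans (by gcongr)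
  rw [← ENNReal.ofReal_add dist_nonneg dist_nonneg, add_comm]
  exact ENNReal.ofReal_le_ofReal (dist_triangle x y x₀)

theorem IsMarkovSemigroup.lintegral_dist_add_le {P : ℝ≥0 → Kernel X X}
    (hP : IsMarkovSemigroup P) {lam : ℝ}
    (hcontr : ∀ (x y : X) (t : ℝ≥0),
      wassersteinDist (P t x) (P t y) ≤
        ENNReal.ofReal (Real.exp (-lam * t)) * ENNReal.ofReal (dist x y))
    (x₀ : X) (τ u : ℝ≥0) :
    ∫⁻ y, ENNReal.ofReal (dist y x₀) ∂(P (τ + u) x₀) ≤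
      ∫⁻ y, ENNReal.ofReal (dist y x₀) ∂(P u x₀) +
        ENNReal.ofReal (Real.exp (-lam * u)) * ∫⁻ y, ENNReal.ofReal (dist y x₀) ∂(P τ x₀) := by
  have := hP.1 τ
  have hg : Measurable fun y ↦ ENNReal.ofReal (dist y x₀) := by fun_prop
  rw [hP.2.2, Kernel.lintegral_comp _ _ _ hg, ← lintegral_const_mul _ hg]
  calc ∫⁻ z, ∫⁻ y, ENNReal.ofReal (dist y x₀) ∂(P u z) ∂(P τ x₀)
      ≤ ∫⁻ z, (∫⁻ y, ENNReal.ofReal (dist y x₀) ∂(P u x₀) +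
          ENNReal.ofReal (Real.exp (-lam * u)) * ENNReal.ofReal (dist z x₀)) ∂(P τ x₀) :=
        lintegral_mono fun z ↦ lintegral_dist_le_of_wassersteinDist_le x₀ (hcontr z x₀ u)
    _ = _ := by rw [lintegral_add_left measurable_const, lintegral_const, measure_univ, mul_one]

end Wasserstein

theorem lyapunov_from_wasserstein_contraction_general
    {X : Type*} [MeasurableSpace X] [MetricSpace X] [BorelSpace X]
    (P : ℝ≥0 → Kernel X X) (hP : IsMarkovSemigroup P)
    (lam : ℝ) (hlam : lam ≠ 0)
    (hcontr : ∀ (x y : X) (t : ℝ≥0),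
      wassersteinDist (P t x) (P t y) ≤
        ENNReal.ofReal (Real.exp (-lam * t)) * ENNReal.ofReal (dist x y))
    (x₀ : X) (t₀ : ℝ≥0) (ht₀ : 0 < t₀)
    (hbound : (⨆ t ∈ Set.Icc (0 : ℝ≥0) t₀,
        ∫⁻ y, ENNReal.ofReal (dist y x₀) ∂(P t x₀)) < ∞) :
    ∃ C₁ C₂ : ℝ, 0 < C₁ ∧ 0 < C₂ ∧ ∀ (x : X) (t : ℝ≥0),
      ∫⁻ y, ENNReal.ofReal (dist y x₀) ∂(P t x) ≤
        ENNReal.ofReal (Real.exp (-lam * t)) *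
          (ENNReal.ofReal (dist x x₀) + ENNReal.ofReal C₁) + ENNReal.ofReal C₂ := by
  obtain ⟨C₁, C₂, hC₁, hC₂, hC⟩ := exists_le_exp_mul_add_of_le_add_exp_mul hlam ht₀
    (hP.lintegral_dist_add_le hcontr x₀ t₀) hbound
  refine ⟨C₁, C₂, hC₁, hC₂, fun x t ↦ ?_⟩
  calc ∫⁻ y, ENNReal.ofReal (dist y x₀) ∂(P t x)
      ≤ ∫⁻ y, ENNReal.ofReal (dist y x₀) ∂(P t x₀) +
          ENNReal.ofReal (Real.exp (-lam * t)) * ENNReal.ofReal (dist x x₀) :=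
        lintegral_dist_le_of_wassersteinDist_le x₀ (hcontr x x₀ t)
    _ ≤ ENNReal.ofReal (Real.exp (-lam * t)) * ENNReal.ofReal C₁ + ENNReal.ofReal C₂ +
          ENNReal.ofReal (Real.exp (-lam * t)) * ENNReal.ofReal (dist x x₀) := by grw [hC t]
    _ = _ := by ring

theorem lyapunov_from_wasserstein_contraction
    {X : Type*} [MeasurableSpace X] [MetricSpace X] [CompleteSpace X]
    [TopologicalSpace.SeparableSpace X] [BorelSpace X]
    (P : ℝ≥0 → Kernel X X) (hP : IsMarkovSemigroup P)
    (lam : ℝ) (hlam : lam ≠ 0)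
    (hcontr : ∀ (x y : X) (t : ℝ≥0),
      wassersteinDist (P t x) (P t y) ≤
        ENNReal.ofReal (Real.exp (-lam * t)) * ENNReal.ofReal (dist x y))
    (x₀ : X) (t₀ : ℝ≥0) (ht₀ : 0 < t₀)
    (hbound : (⨆ t ∈ Set.Icc (0 : ℝ≥0) t₀,
        ∫⁻ y, ENNReal.ofReal (dist y x₀) ∂(P t x₀)) < ∞) :
    ∃ C₁ C₂ : ℝ, 0 < C₁ ∧ 0 < C₂ ∧ ∀ (x : X) (t : ℝ≥0),
      ∫⁻ y, ENNReal.ofReal (dist y x₀) ∂(P t x) ≤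
        ENNReal.ofReal (Real.exp (-lam * t)) *
          (ENNReal.ofReal (dist x x₀) + ENNReal.ofReal C₁) + ENNReal.ofReal C₂ :=
  lyapunov_from_wasserstein_contraction_general P hP lam hlam hcontr x₀ t₀ ht₀ hbound
end

section
/- Let A₀ be the 2×2 real matrix with rows (−1, 3) and (−1/3, −1), and A₁ the 2×2 real matrix with rows (−1, −1/3) and (3, −1). Define the norms ‖(u₁,u₂)‖₀ = sqrt((u₁/3)² + u₂²) and ‖(u₁,u₂)‖₁ = sqrt(u₁² + (u₂/3)²) on ℝ². Then for each i ∈ {0,1} and every differentiable curve Z : [0,∞) → ℝ² satisfying Z'(t) = A_i Z(t) for all t ≥ 0, one has ‖Z(t)‖_i ≤ e^{−t} ‖Z(0)‖_i for every t ≥ 0. -/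
/-!
Along a solution of `Z' = A_i Z` the square of `‖Z‖_i` satisfies the scalar equation `q' = -2 q`:
the weights of `‖·‖_i` are chosen so that the off-diagonal part of `A_i` is skew for the associated
inner product, leaving only the contribution of the diagonal `-1`. Hence `q(t) = e^{-2t} q(0)`, and
the contraction estimate holds with equality.
-/

/-- The two matrices of the blow-up example of Section 5.3. -/
noncomputable def spiralMatrix : Fin 2 → Matrix (Fin 2) (Fin 2) ℝ :=
  ![!![-1, 3; -1/3, -1], !![-1, -1/3; 3, -1]]

/-- The two adapted norms of the blow-up example of Section 5.3. -/
noncomputable def spiralNorm : Fin 2 → (Fin 2 → ℝ) → ℝ :=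
  ![fun u => Real.sqrt ((u 0 / 3) ^ 2 + (u 1) ^ 2),
    fun u => Real.sqrt ((u 0) ^ 2 + (u 1 / 3) ^ 2)]

open Real Set

theorem eq_exp_mul_of_hasDerivAt_mul_self {f : ℝ → ℝ} {c : ℝ}
    (hf : ∀ t, 0 ≤ t → HasDerivAt f (c * f t) t) {t : ℝ} (ht : 0 ≤ t) :
    f t = exp (c * t) * f 0 := by
  have hconst_deriv : ∀ s, 0 ≤ s → HasDerivAt (fun s => exp (-(c * s)) * f s) 0 s := by
    intro s hs
    have hexp : HasDerivAt (fun s => exp (-(c * s))) (exp (-(c * s)) * -c) s := by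
      simpa using ((hasDerivAt_id s).const_mul c).neg.exp
    exact (hexp.fun_mul (hf s hs)).congr_deriv (by ring)
  have hconst := constant_of_has_deriv_right_zero
    (fun s hs => (hconst_deriv s hs.1).continuousAt.continuousWithinAt)
    (fun s hs => (hconst_deriv s hs.1).hasDerivWithinAt) t (right_mem_Icc.2 ht)
  simp only [mul_zero, neg_zero, exp_zero, one_mul] at hconst
  rw [← hconst, ← mul_assoc, ← exp_add, add_neg_cancel, exp_zero, one_mul]

theorem spiralNorm_nonneg (i : Fin 2) (u : Fin 2 → ℝ) : 0 ≤ spiralNorm i u := by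
  fin_cases i <;> exact sqrt_nonneg _

theorem spiralNorm_sq (i : Fin 2) (u : Fin 2 → ℝ) :
    spiralNorm i u ^ 2 = ![(u 0 / 3) ^ 2 + u 1 ^ 2, u 0 ^ 2 + (u 1 / 3) ^ 2] i := by
  fin_cases i <;> simp [spiralNorm, sq_sqrt, add_nonneg, sq_nonneg]

theorem hasDerivAt_spiralNorm_sq {i : Fin 2} {Z : ℝ → Fin 2 → ℝ} {t : ℝ}
    (hZ : HasDerivAt Z ((spiralMatrix i).mulVec (Z t)) t) :
    HasDerivAt (fun s => spiralNorm i (Z s) ^ 2) (-2 * spiralNorm i (Z t) ^ 2) t := by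
  have h0 := hasDerivAt_pi.1 hZ 0
  have h1 := hasDerivAt_pi.1 hZ 1
  fin_cases i <;>
    simp only [spiralNorm_sq, spiralMatrix, Matrix.mulVec, dotProduct, Fin.sum_univ_two,
      Matrix.of_apply, Matrix.cons_val', Matrix.cons_val_zero, Matrix.cons_val_one,
      Matrix.cons_val_fin_one, Fin.zero_eta, Fin.mk_one, Fin.isValue] at h0 h1 ⊢
  · exact (((h0.div_const 3).fun_pow 2).fun_add (h1.fun_pow 2)).congr_deriv (by ring)
  · exact ((h0.fun_pow 2).fun_add ((h1.div_const 3).fun_pow 2)).congr_deriv (by ring)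

/-- Each linear flow `Z' = A_i Z` contracts at rate `1` in its adapted norm `‖·‖_i`
(first half of the estimate (curv-spirale)). -/
theorem spiral_flow_contraction
    (i : Fin 2) (Z : ℝ → Fin 2 → ℝ)
    (hZ : ∀ t : ℝ, 0 ≤ t → HasDerivAt Z ((spiralMatrix i).mulVec (Z t)) t) :
    ∀ t : ℝ, 0 ≤ t → spiralNorm i (Z t) ≤ Real.exp (-t) * spiralNorm i (Z 0) := by
  intro t ht
  have hsq := eq_exp_mul_of_hasDerivAt_mul_self
    (fun s hs => hasDerivAt_spiralNorm_sq (hZ s hs)) ht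
  refine le_of_eq ((pow_left_inj₀ (spiralNorm_nonneg i _)
    (mul_nonneg (exp_pos _).le (spiralNorm_nonneg i _)) two_ne_zero).1 ?_)
  rw [hsq, mul_pow, ← exp_nat_mul]
  ring_nf
end
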